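/- Let ε > 0, t ∈ (0,1), and let K₀, K₁ be symmetric positive definite n×n matrices. Set N₁₀ = (I + (16/ε²)·K₁^{1/2} K₀ K₁^{1/2})^{1/2}. Then ((1−t)²ε²/16)·K₁^{−1/2}·(−I + ((4t/((1−t)ε))·K₁ + N₁₀)²)·K₁^{−1/2} = (1−t)²·K₀ + t²·K₁ + t(1−t)·(R₀₁ + R₁₀), where R₀₁ = K₀^{1/2}((ε²/16)·I + K₀^{1/2}K₁K₀^{1/2})^{1/2}K₀^{−1/2} and R₁₀ = K₁^{1/2}((ε²/16)·I + K₁^{1/2}K₀K₁^{1/2})^{1/2}K₁^{−1/2}. -/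

import Mathlib

/-!
Write `S = K₁^{1/2}`, `T = K₀^{1/2}`, `c = ε²/16`, `Q = (c I + S K₀ S)^{1/2}`,
`a = 4t/((1-t)ε)` and `b = 4/ε`, so that `N₁₀ = b Q` and `b² Q² = I + b² S K₀ S`. Expanding the
square gives `S⁻¹ (-I + (a K₁ + b Q)²) S⁻¹ = a² K₁ + a b (S Q S⁻¹ + S⁻¹ Q S) + b² K₀`, where
`S Q S⁻¹ = R₁₀`.
The remaining identity `S⁻¹ Q S = R₀₁` holds because `S T` intertwines `c I + T K₁ T` with
`c I + S K₀ S`, hence also their square roots: on the finite spectrum of a matrix the square root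
agrees with an interpolating polynomial.
-/

open Matrix
open scoped Classical

noncomputable section

/-- The unique symmetric positive semidefinite square root of a positive
semidefinite matrix (junk value `0` otherwise). -/
def sqrtm {n : ℕ} (A : Matrix (Fin n) (Fin n) ℝ) : Matrix (Fin n) (Fin n) ℝ :=
  if h : A.PosSemidef then
    (h.1.eigenvectorUnitary : Matrix (Fin n) (Fin n) ℝ) *
      diagonal (Real.sqrt ∘ h.1.eigenvalues) *
      (star h.1.eigenvectorUnitary : Matrix (Fin n) (Fin n) ℝ)
  else 0

end

open scoped MatrixOrder Polynomial

theorem Polynomial.exists_eqOn_eval_of_finite {F : Type*} [Field F] {s : Set F}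
    (hs : s.Finite) (f : F → F) : ∃ q : F[X], Set.EqOn f (fun x ↦ q.eval x) s := by
  classical
  refine ⟨Lagrange.interpolate hs.toFinset id f, fun x hx ↦ ?_⟩
  exact (Lagrange.eval_interpolate_at_node (v := id) f (Set.injOn_id _)
    (hs.mem_toFinset.mpr hx)).symm

theorem SemiconjBy.aeval {R A : Type*} [CommSemiring R] [Semiring A] [Algebra R A]
    {x a b : A} (h : SemiconjBy x b a) (q : R[X]) :
    SemiconjBy x (Polynomial.aeval b q) (Polynomial.aeval a q) := by
  induction q using Polynomial.induction_on' with
  | add p q hp hq => simpa only [map_add] using hp.add_right hq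
  | monomial k r =>
    simp only [Polynomial.aeval_monomial, ← Algebra.smul_def]
    exact (h.pow_right k).smul_right r

section CFC

variable {A : Type*} [Ring A] [StarRing A] [Algebra ℝ A] [TopologicalSpace A]
  [ContinuousFunctionalCalculus ℝ A IsSelfAdjoint]

theorem SemiconjBy.cfc_of_finite_spectrum {x a b : A} (h : SemiconjBy x b a)
    (ha : IsSelfAdjoint a) (hb : IsSelfAdjoint b)
    (ha' : (spectrum ℝ a).Finite) (hb' : (spectrum ℝ b).Finite) (f : ℝ → ℝ) :
    SemiconjBy x (cfc f b) (cfc f a) := by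
  obtain ⟨q, hq⟩ := Polynomial.exists_eqOn_eval_of_finite (ha'.union hb') f
  rw [cfc_congr (hq.mono Set.subset_union_right), cfc_congr (hq.mono Set.subset_union_left),
    cfc_polynomial q a, cfc_polynomial q b]
  exact h.aeval q

variable [PartialOrder A] [StarOrderedRing A] [NonnegSpectrumClass ℝ A]

theorem CFC.sqrt_mul_mul_sqrt_nonneg {a : A} (ha : 0 ≤ a) (b : A) :
    0 ≤ CFC.sqrt b * a * CFC.sqrt b := by
  simpa only [(CFC.sqrt_nonneg b).isSelfAdjoint.star_eq] using
    star_left_conjugate_nonneg ha (CFC.sqrt b)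

variable [IsSemitopologicalRing A] [T2Space A]

theorem SemiconjBy.sqrt_of_finite_spectrum {x a b : A} (h : SemiconjBy x b a)
    (ha : 0 ≤ a) (hb : 0 ≤ b) (ha' : (spectrum ℝ a).Finite) (hb' : (spectrum ℝ b).Finite) :
    SemiconjBy x (CFC.sqrt b) (CFC.sqrt a) := by
  rw [CFC.sqrt_eq_cfc, CFC.sqrt_eq_cfc, cfc_nnreal_eq_real _ a, cfc_nnreal_eq_real _ b]
  exact h.cfc_of_finite_spectrum ha.isSelfAdjoint hb.isSelfAdjoint ha' hb' _

theorem CFC.sqrt_smul [PosSMulMono ℝ A] {r : ℝ} (hr : 0 ≤ r) (a : A) (ha : 0 ≤ a) :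
    CFC.sqrt (r • a) = √r • CFC.sqrt a := by
  refine CFC.sqrt_unique ?_ (smul_nonneg (Real.sqrt_nonneg r) (CFC.sqrt_nonneg a))
  rw [smul_mul_smul, Real.mul_self_sqrt hr, CFC.sqrt_mul_sqrt_self a ha]

end CFC

theorem conj_neg_one_add_sq {R : Type*} [Ring R] [Algebra ℝ R] {s s' k₀ k₁ q : R}
    (hs : s' * s = 1) (hs' : s * s' = 1) (hk₁ : s * s = k₁) {b c : ℝ} (hbc : b ^ 2 * c = 1)
    (hq : q * q = c • 1 + s * k₀ * s) (a : ℝ) :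
    s' * (-1 + (a • k₁ + b • q) ^ 2) * s' =
      a ^ 2 • k₁ + (a * b) • (s * q * s' + s' * q * s) + b ^ 2 • k₀ := by
  have hsq : -1 + (a • k₁ + b • q) ^ 2 =
      a ^ 2 • (k₁ * k₁) + (a * b) • (k₁ * q + q * k₁) + b ^ 2 • (s * k₀ * s) := by
    have : (a • k₁ + b • q) ^ 2 =
        a ^ 2 • (k₁ * k₁) + (a * b) • (k₁ * q + q * k₁) + b ^ 2 • (q * q) := by
      simp only [sq, add_mul, mul_add, smul_mul_smul]
      module
    rw [this, hq, smul_add (b ^ 2), smul_smul, hbc, one_smul]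
    abel
  subst hk₁
  have h₁ : s' * (s * s * (s * s)) * s' = s * s := by
    simp only [← mul_assoc, hs, one_mul]; simp only [mul_assoc, hs', mul_one]
  have h₂ : s' * (s * s * q) * s' = s * q * s' := by
    simp only [← mul_assoc, hs, one_mul]
  have h₃ : s' * (q * (s * s)) * s' = s' * q * s := by
    simp only [mul_assoc, hs', mul_one]
  have h₄ : s' * (s * k₀ * s) * s' = k₀ := by
    simp only [← mul_assoc, hs, one_mul]; simp only [mul_assoc, hs', mul_one]
  rw [hsq]
  simp only [mul_add, add_mul, mul_smul_comm, smul_mul_assoc, h₁, h₂, h₃, h₄]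

theorem sqrtm_eq_sqrt {n : ℕ} (A : Matrix (Fin n) (Fin n) ℝ) : sqrtm A = CFC.sqrt A := by
  unfold sqrtm
  split_ifs with h
  · rw [CFC.sqrt_eq_cfc, cfc_nnreal_eq_real _ A h.nonneg, h.1.cfc_eq]
    simp [IsHermitian.cfc, Function.comp_def, Real.coe_sqrt, h.eigenvalues_nonneg]
  · rw [CFC.sqrt_of_not_nonneg (nonneg_iff_posSemidef.not.mpr h)]

namespace Matrix

variable {m 𝕜 : Type*} [Fintype m] [DecidableEq m] [RCLike 𝕜]

open scoped ComplexOrder in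
theorem PosDef.isUnit_det_sqrt {K : Matrix m m 𝕜} (hK : K.PosDef) :
    IsUnit (CFC.sqrt K).det := by
  rw [← isUnit_iff_isUnit_det]
  refine ((Commute.refl _).isUnit_mul_iff.mp ?_).1
  rw [CFC.sqrt_mul_sqrt_self K hK.posSemidef.nonneg]
  exact hK.isUnit

theorem semiconjBy_sqrt_add_sqrt_mul_mul_sqrt {K₀ K₁ : Matrix m m 𝕜} (h₀ : 0 ≤ K₀)
    (h₁ : 0 ≤ K₁) {c : ℝ} (hc : 0 ≤ c) :
    SemiconjBy (CFC.sqrt K₁ * CFC.sqrt K₀)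
      (CFC.sqrt (c • 1 + CFC.sqrt K₀ * K₁ * CFC.sqrt K₀))
      (CFC.sqrt (c • 1 + CFC.sqrt K₁ * K₀ * CFC.sqrt K₁)) := by
  have hc1 : (0 : Matrix m m 𝕜) ≤ c • 1 := smul_nonneg hc zero_le_one
  refine SemiconjBy.sqrt_of_finite_spectrum ?_
    (add_nonneg hc1 (CFC.sqrt_mul_mul_sqrt_nonneg h₀ K₁))
    (add_nonneg hc1 (CFC.sqrt_mul_mul_sqrt_nonneg h₁ K₀))
    finite_real_spectrum finite_real_spectrum
  have hS := CFC.sqrt_mul_sqrt_self K₁ h₁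
  have hT := CFC.sqrt_mul_sqrt_self K₀ h₀
  simp only [SemiconjBy, mul_add, add_mul, mul_smul_comm, smul_mul_assoc, mul_one, one_mul]
  congr 1
  calc _ = CFC.sqrt K₁ * (CFC.sqrt K₀ * CFC.sqrt K₀) * K₁ * CFC.sqrt K₀ := by noncomm_ring
    _ = CFC.sqrt K₁ * K₀ * (CFC.sqrt K₁ * CFC.sqrt K₁) * CFC.sqrt K₀ := by rw [hS, hT]
    _ = _ := by noncomm_ring

end Matrix

theorem stmt_7 {n : ℕ} (ε t : ℝ) (hε : 0 < ε) (ht : t ∈ Set.Ioo (0 : ℝ) 1)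
    (K₀ K₁ : Matrix (Fin n) (Fin n) ℝ) (hK₀ : K₀.PosDef) (hK₁ : K₁.PosDef)
    (N₁₀ R₀₁ R₁₀ : Matrix (Fin n) (Fin n) ℝ)
    (hN : N₁₀ = sqrtm (1 + (16 / ε ^ 2) • (sqrtm K₁ * K₀ * sqrtm K₁)))
    (hR₀₁ : R₀₁ = sqrtm K₀ * sqrtm ((ε ^ 2 / 16) • 1 + sqrtm K₀ * K₁ * sqrtm K₀) * (sqrtm K₀)⁻¹)
    (hR₁₀ : R₁₀ = sqrtm K₁ * sqrtm ((ε ^ 2 / 16) • 1 + sqrtm K₁ * K₀ * sqrtm K₁) * (sqrtm K₁)⁻¹) :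
    ((1 - t) ^ 2 * ε ^ 2 / 16) •
        ((sqrtm K₁)⁻¹ * (-1 + ((4 * t / ((1 - t) * ε)) • K₁ + N₁₀) ^ 2) * (sqrtm K₁)⁻¹) =
      (1 - t) ^ 2 • K₀ + t ^ 2 • K₁ + (t * (1 - t)) • (R₀₁ + R₁₀) := by
  have h1t : 1 - t ≠ 0 := (sub_pos.mpr ht.2).ne'
  have h₀ := hK₀.posSemidef.nonneg
  have h₁ := hK₁.posSemidef.nonneg
  have hc : 0 ≤ ε ^ 2 / 16 := by positivity
  simp only [sqrtm_eq_sqrt] at hN hR₀₁ hR₁₀ ⊢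
  subst hN hR₀₁ hR₁₀
  set S := CFC.sqrt K₁
  set T := CFC.sqrt K₀
  set Q := CFC.sqrt ((ε ^ 2 / 16) • 1 + S * K₀ * S)
  have hQ : 0 ≤ (ε ^ 2 / 16) • 1 + S * K₀ * S :=
    add_nonneg (smul_nonneg hc zero_le_one) (CFC.sqrt_mul_mul_sqrt_nonneg h₀ K₁)
  have hN : CFC.sqrt (1 + (16 / ε ^ 2) • (S * K₀ * S)) = (4 / ε) • Q := by
    have h16 : 16 / ε ^ 2 * (ε ^ 2 / 16) = 1 := by field_simp
    have h4 : √(16 / ε ^ 2) = 4 / ε := by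
      rw [show 16 / ε ^ 2 = (4 / ε) ^ 2 by ring, Real.sqrt_sq (by positivity)]
    rw [← h4, ← CFC.sqrt_smul (by positivity) _ hQ, smul_add, smul_smul, h16, one_smul]
  have hR : S⁻¹ * Q * S = T * CFC.sqrt ((ε ^ 2 / 16) • 1 + T * K₁ * T) * T⁻¹ := by
    rw [← mul_nonsing_inv_cancel_right T (S⁻¹ * Q * S) hK₀.isUnit_det_sqrt]
    congr 1
    rw [mul_assoc _ S, mul_assoc, ← (semiconjBy_sqrt_add_sqrt_mul_mul_sqrt h₀ h₁ hc).eq,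
      mul_assoc]
    exact nonsing_inv_mul_cancel_left _ _ hK₁.isUnit_det_sqrt
  rw [hN, conj_neg_one_add_sq (nonsing_inv_mul _ hK₁.isUnit_det_sqrt)
    (mul_nonsing_inv _ hK₁.isUnit_det_sqrt) (CFC.sqrt_mul_sqrt_self K₁ h₁)
    (by field_simp; norm_num) (CFC.sqrt_mul_sqrt_self _ hQ), hR]
  match_scalars <;> field_simp <;> ring
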